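/- For α, β ∈ ℂ with α ≠ β, the algebras B⁴₂₄(α) and B⁴₂₄(β) are not isomorphic as ℂ-algebras. -/

import Mathlib

noncomputable def mB424 (α : ℂ) : (Fin 4 → ℂ) →ₗ[ℂ] (Fin 4 → ℂ) →ₗ[ℂ] (Fin 4 → ℂ) :=
  LinearMap.mk₂ ℂ (fun u v =>
      ![0, u 0 * v 0, u 0 * v 1 + α * (u 1 * v 0),
        u 0 * v 2 + α * (u 1 * v 1) + α * (u 2 * v 0)])
    (fun x y v => by funext i; fin_cases i <;> simp <;> ring)
    (fun a x v => by funext i; fin_cases i <;> simp <;> ring)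
    (fun u x y => by funext i; fin_cases i <;> simp <;> ring)
    (fun u a x => by funext i; fin_cases i <;> simp <;> ring)

/-!
Write `x = e₁` (coordinates are indexed from `0`, so `eᵢ = Pi.single (i - 1) 1`). In `B⁴₂₄(α)`
the two cubes of `x` satisfy `(x x) x = α • x (x x)` with `x (x x) = e₃ ≠ 0`, and an isomorphism
carries this relation to the image `y` of `x`. In `B⁴₂₄(β)`, however, the `e₃`-coordinates of
`y (y y)` and `(y y) y` are `y₀³` and `β y₀³`, so the relation forces `(α - β) y₀³ = 0`; and when
`y₀ = 0` the cube `y (y y)` vanishes altogether.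
-/

theorem mB424_apply (α : ℂ) (u v : Fin 4 → ℂ) :
    mB424 α u v = ![0, u 0 * v 0, u 0 * v 1 + α * (u 1 * v 0),
      u 0 * v 2 + α * (u 1 * v 1) + α * (u 2 * v 0)] :=
  rfl

namespace B424

variable (α : ℂ)

theorem mul_sq_apply_two (u : Fin 4 → ℂ) : mB424 α u (mB424 α u u) 2 = u 0 ^ 3 := by
  simp only [mB424_apply, Matrix.cons_val]
  ring

theorem sq_mul_apply_two (u : Fin 4 → ℂ) : mB424 α (mB424 α u u) u 2 = α * u 0 ^ 3 := by
  simp only [mB424_apply, Matrix.cons_val]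
  ring

theorem mul_sq_eq_zero {u : Fin 4 → ℂ} (hu : u 0 = 0) : mB424 α u (mB424 α u u) = 0 := by
  funext i
  fin_cases i <;> simp [mB424_apply, hu]

theorem mul_sq_single : mB424 α (Pi.single 0 1) (mB424 α (Pi.single 0 1) (Pi.single 0 1)) =
    Pi.single 2 1 := by
  funext i
  fin_cases i <;> simp [mB424_apply]

theorem sq_mul_single : mB424 α (mB424 α (Pi.single 0 1) (Pi.single 0 1)) (Pi.single 0 1) =
    α • Pi.single 2 1 := by
  funext i
  fin_cases i <;> simp [mB424_apply]

theorem eq_of_sq_mul_eq_smul_mul_sq {β : ℂ} {y : Fin 4 → ℂ}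
    (hne : mB424 β y (mB424 β y y) ≠ 0)
    (hy : mB424 β (mB424 β y y) y = α • mB424 β y (mB424 β y y)) : α = β := by
  have h2 := congrFun hy 2
  rw [sq_mul_apply_two, Pi.smul_apply, mul_sq_apply_two, smul_eq_mul] at h2
  have hy0 : y 0 ≠ 0 := fun hy0 => hne (mul_sq_eq_zero β hy0)
  exact (mul_right_cancel₀ (pow_ne_zero 3 hy0) h2).symm

end B424

/-- For `α ≠ β`, the algebras `B⁴₂₄(α)` and `B⁴₂₄(β)` are not isomorphic. -/
theorem B424_pairwise_nonisomorphic (α β : ℂ) (h : α ≠ β) :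
    ¬∃ φ : (Fin 4 → ℂ) ≃ₗ[ℂ] (Fin 4 → ℂ),
      ∀ u v : Fin 4 → ℂ, φ (mB424 α u v) = mB424 β (φ u) (φ v) := by
  rintro ⟨φ, hφ⟩
  set x : Fin 4 → ℂ := Pi.single 0 1
  have hcube : mB424 β (φ x) (mB424 β (φ x) (φ x)) = φ (Pi.single 2 1) := by
    rw [← hφ, ← hφ, B424.mul_sq_single]
  refine h (B424.eq_of_sq_mul_eq_smul_mul_sq α (y := φ x) ?_ ?_)
  · rw [hcube, map_ne_zero_iff φ φ.injective]
    exact Pi.single_ne_zero_iff.mpr one_ne_zero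
  · rw [hcube, ← hφ, ← hφ, B424.sq_mul_single, map_smul]
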